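/- Let W be an N×N weight matrix on ℝ satisfying W(x) = W(−x) for almost every x, with monic orthogonal polynomials {H_n}_{n≥0}, and let U(y) = y^{1/2} W(√y) be the associated weight matrix on (0,∞) with monic orthogonal polynomials {F_n}_{n≥0}. Then for every n ≥ 0, H_{2n+1}(x) = x · F_n(x²), i.e. H_{2n+1} equals the product of the polynomial x with the composition of F_n with the polynomial x². -/

import Mathlib

open MeasureTheory Polynomial Set Matrix
open scoped ComplexOrder

noncomputable section

/-- Matrix polynomials: `N × N` matrices with entries in `ℂ[X]`. -/
abbrev MatPoly (N : ℕ) := Matrix (Fin N) (Fin N) (Polynomial ℂ)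

/-- Evaluation of a matrix polynomial at a real point. -/
def evalM {N : ℕ} (P : MatPoly N) (x : ℝ) : Matrix (Fin N) (Fin N) ℂ :=
  fun i j => (P i j).eval (x : ℂ)

/-- The `k`-th matrix coefficient of a matrix polynomial. -/
def coeffM {N : ℕ} (P : MatPoly N) (k : ℕ) : Matrix (Fin N) (Fin N) ℂ :=
  fun i j => (P i j).coeff k

/-- Entrywise derivative of a matrix polynomial. -/
def derivM {N : ℕ} (P : MatPoly N) : MatPoly N :=
  fun i j => Polynomial.derivative (P i j)

/-- Entrywise iterated derivative. -/
def iterDerivM {N : ℕ} (k : ℕ) (P : MatPoly N) : MatPoly N :=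
  fun i j => (fun q => Polynomial.derivative q)^[k] (P i j)

/-- Constant matrix polynomial. -/
def constM {N : ℕ} (A : Matrix (Fin N) (Fin N) ℂ) : MatPoly N :=
  A.map Polynomial.C

/-- Entrywise multiplication by the scalar polynomial `X`. -/
def XmulM {N : ℕ} (P : MatPoly N) : MatPoly N :=
  fun i j => Polynomial.X * P i j

/-- Composition with the polynomial `X ^ 2` (the substitution `x ↦ x²`). -/
def compSqM {N : ℕ} (P : MatPoly N) : MatPoly N :=
  fun i j => (P i j).comp (Polynomial.X ^ 2)

/-- Composition with `-X` (the substitution `x ↦ -x`). -/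
def reflectM {N : ℕ} (P : MatPoly N) : MatPoly N :=
  fun i j => (P i j).comp (-Polynomial.X)

/-- Right action of the matrix differential operator `D = ∑_{j=0}^s (d^j/dx^j) F j`
on a matrix polynomial: `(P · D)(x) = ∑_{j=0}^s P^{(j)}(x) F_j(x)`. -/
def applyOp {N : ℕ} (s : ℕ) (F : ℕ → MatPoly N) (P : MatPoly N) : MatPoly N :=
  ∑ j ∈ Finset.range (s + 1), iterDerivM j P * F j

/-- Entrywise integral of a matrix-valued function over a set. -/
def matInt {N : ℕ} (I : Set ℝ) (f : ℝ → Matrix (Fin N) (Fin N) ℂ) :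
    Matrix (Fin N) (Fin N) ℂ :=
  fun i j => ∫ x in I, f x i j

/-- The matrix inner product `⟨P, Q⟩_W = ∫_I P(x) W(x) Q(x)^* dx`. -/
def innerW {N : ℕ} (I : Set ℝ) (W : ℝ → Matrix (Fin N) (Fin N) ℂ)
    (P Q : MatPoly N) : Matrix (Fin N) (Fin N) ℂ :=
  matInt I (fun x => evalM P x * W x * (evalM Q x)ᴴ)

/-- `W` is a weight matrix on the set `I ⊆ ℝ`: integrable on `I`, positive definite
almost everywhere on `I`, and with all moments finite. -/
structure IsWeight {N : ℕ} (I : Set ℝ) (W : ℝ → Matrix (Fin N) (Fin N) ℂ) : Prop where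
  integrable : ∀ i j, IntegrableOn (fun x => W x i j) I
  posdef : ∀ᵐ x ∂(volume.restrict I), (W x).PosDef
  moments : ∀ (n : ℕ) (i j), IntegrableOn (fun (x : ℝ) => (x : ℂ) ^ n * W x i j) I

/-- `P` is monic of degree exactly `n` (leading coefficient the identity matrix). -/
def IsMonicDeg {N : ℕ} (P : MatPoly N) (n : ℕ) : Prop :=
  coeffM P n = 1 ∧ ∀ k, n < k → coeffM P k = 0

/-- `P` is the sequence of monic orthogonal polynomials of the weight `W` on `I`. -/
def MonicOPS {N : ℕ} (I : Set ℝ) (W : ℝ → Matrix (Fin N) (Fin N) ℂ)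
    (P : ℕ → MatPoly N) : Prop :=
  (∀ n, IsMonicDeg (P n) n) ∧ ∀ n m, n ≠ m → innerW I W (P n) (P m) = 0

/-- A (not necessarily monic) sequence of orthogonal polynomials for `W` on `I`:
degree `n` with invertible leading coefficient, pairwise orthogonal. -/
def IsOPS {N : ℕ} (I : Set ℝ) (W : ℝ → Matrix (Fin N) (Fin N) ℂ)
    (Q : ℕ → MatPoly N) : Prop :=
  (∀ n, IsUnit (coeffM (Q n) n) ∧ ∀ k, n < k → coeffM (Q n) k = 0) ∧
  ∀ n m, n ≠ m → innerW I W (Q n) (Q m) = 0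

/-- The Laguerre-type weight `V(y) = y^{-1/2} W(√y)` on `(0,∞)`. -/
def VWeight {N : ℕ} (W : ℝ → Matrix (Fin N) (Fin N) ℂ) :
    ℝ → Matrix (Fin N) (Fin N) ℂ :=
  fun y => (Real.sqrt y)⁻¹ • W (Real.sqrt y)

/-- The Laguerre-type weight `U(y) = y^{1/2} W(√y)` on `(0,∞)`. -/
def UWeight {N : ℕ} (W : ℝ → Matrix (Fin N) (Fin N) ℂ) :
    ℝ → Matrix (Fin N) (Fin N) ℂ :=
  fun y => Real.sqrt y • W (Real.sqrt y)

/-- `p` is the sequence of monic scalar orthogonal polynomials of the scalar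
weight `w` on `I`. -/
def ScalarMonicOPS (I : Set ℝ) (w : ℝ → ℝ) (p : ℕ → Polynomial ℝ) : Prop :=
  (∀ n, (p n).Monic ∧ (p n).natDegree = n) ∧
  ∀ n m, n ≠ m → ∫ x in I, (p n).eval x * (p m).eval x * w x = 0

/-! Write `G(x) = x F_n(x²)`. It is monic of degree `2n + 1`, so `D = H_{2n+1} - G` has degree
at most `2n` and `⟨H_{2n+1}, D⟩_W = 0`. `G` is also orthogonal to every `x^k` with `k ≤ 2n`:
for even `k` because `G(x) W(x) x^k` is odd, and for `k = 2j + 1` because the substitution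
`y = x²` turns `⟨G, x^{2j+1}⟩_W` into `⟨F_n, y^j⟩_U`, which vanishes as `j < n`.
Hence `⟨D, D⟩_W = 0`, and positive definiteness of `W` forces `D = 0`. -/

lemma Polynomial.star_eval_ofReal (q : ℂ[X]) (x : ℝ) :
    star (q.eval (x : ℂ)) = (q.map (starRingEnd ℂ)).eval (x : ℂ) := by
  rw [eval_map, ← Complex.conj_ofReal x, eval₂_at_apply, Complex.conj_ofReal]
  rfl

section MatrixPolynomials

variable {N : ℕ}

@[simp]
lemma evalM_sub (P Q : MatPoly N) (x : ℝ) : evalM (P - Q) x = evalM P x - evalM Q x := by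
  ext i j; simp [evalM]

@[simp]
lemma evalM_sum {α : Type*} (s : Finset α) (f : α → MatPoly N) (x : ℝ) :
    evalM (∑ a ∈ s, f a) x = ∑ a ∈ s, evalM (f a) x := by
  ext i j; simp [evalM, Matrix.sum_apply, eval_finsetSum]

@[simp]
lemma evalM_constM_mul (A : Matrix (Fin N) (Fin N) ℂ) (Q : MatPoly N) (x : ℝ) :
    evalM (constM A * Q) x = A * evalM Q x := by
  ext i j; simp [evalM, constM, Matrix.mul_apply, eval_finsetSum]

@[simp]
lemma evalM_XmulM (P : MatPoly N) (x : ℝ) : evalM (XmulM P) x = (x : ℂ) • evalM P x := by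
  ext i j; simp [evalM, XmulM]

@[simp]
lemma evalM_compSqM (P : MatPoly N) (x : ℝ) : evalM (compSqM P) x = evalM P (x ^ 2) := by
  ext i j; simp [evalM, compSqM]

lemma coeffM_sub (P Q : MatPoly N) (k : ℕ) : coeffM (P - Q) k = coeffM P k - coeffM Q k := by
  ext i j; simp [coeffM]

lemma coeffM_constM_mul (A : Matrix (Fin N) (Fin N) ℂ) (Q : MatPoly N) (k : ℕ) :
    coeffM (constM A * Q) k = A * coeffM Q k := by
  ext i j; simp [coeffM, constM, Matrix.mul_apply]

lemma coeffM_compSqM (P : MatPoly N) (k : ℕ) :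
    coeffM (compSqM P) k = if 2 ∣ k then coeffM P (k / 2) else 0 := by
  ext i j
  simp only [coeffM, compSqM, ← expand_eq_comp_X_pow, coeff_expand two_pos]
  split_ifs <;> rfl

lemma coeffM_XmulM_succ (P : MatPoly N) (k : ℕ) : coeffM (XmulM P) (k + 1) = coeffM P k := by
  ext i j; simp [coeffM, XmulM, coeff_X_mul]

lemma eq_zero_of_coeffM_eq_zero {P : MatPoly N} (h : ∀ k, coeffM P k = 0) : P = 0 := by
  ext i j k
  simpa [coeffM] using congrFun₂ (h k) i j

lemma IsMonicDeg.coeffM_sub_eq_zero {P Q : MatPoly N} {n : ℕ} (hP : IsMonicDeg P n)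
    (hQ : IsMonicDeg Q n) (k : ℕ) (hk : n ≤ k) : coeffM (P - Q) k = 0 := by
  rw [coeffM_sub, sub_eq_zero]
  rcases hk.eq_or_lt with rfl | hlt
  · rw [hP.1, hQ.1]
  · rw [hP.2 k hlt, hQ.2 k hlt]

lemma IsMonicDeg.XmulM_compSqM {P : MatPoly N} {n : ℕ} (h : IsMonicDeg P n) :
    IsMonicDeg (XmulM (compSqM P)) (2 * n + 1) := by
  refine ⟨by simp [coeffM_XmulM_succ, coeffM_compSqM, h.1], fun k hk => ?_⟩
  obtain ⟨k, rfl⟩ := Nat.exists_eq_add_of_lt (Nat.zero_lt_of_lt hk)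
  rw [zero_add, coeffM_XmulM_succ, coeffM_compSqM]
  split_ifs with h2
  · exact h.2 _ (by omega)
  · rfl

lemma isMonicDeg_scalar_X_pow (k : ℕ) : IsMonicDeg (scalar (Fin N) (X ^ k : ℂ[X])) k := by
  refine ⟨?_, fun m hm => ?_⟩
  · ext i j; by_cases hij : i = j <;> simp [coeffM, hij, Matrix.one_apply]
  · ext i j; by_cases hij : i = j <;> simp [coeffM, hij, coeff_X_pow, hm.ne']

lemma compSqM_scalar (p : ℂ[X]) :
    compSqM (scalar (Fin N) p) = scalar (Fin N) (p.comp (X ^ 2)) := by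
  ext i j : 1
  by_cases hij : i = j <;> simp [compSqM, hij]

lemma XmulM_scalar (p : ℂ[X]) : XmulM (scalar (Fin N) p) = scalar (Fin N) (X * p) := by
  ext i j : 1
  by_cases hij : i = j <;> simp [XmulM, hij]

lemma exists_eq_sum_constM_mul_of_isMonicDeg {M : ℕ → MatPoly N}
    (hM : ∀ k, IsMonicDeg (M k) k) (m : ℕ) (Q : MatPoly N)
    (hQ : ∀ k, m ≤ k → coeffM Q k = 0) :
    ∃ A : ℕ → Matrix (Fin N) (Fin N) ℂ, Q = ∑ k ∈ Finset.range m, constM (A k) * M k := by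
  induction m generalizing Q with
  | zero => exact ⟨0, by simpa using eq_zero_of_coeffM_eq_zero fun k => hQ k k.zero_le⟩
  | succ m ih =>
    have hlower : ∀ k, m ≤ k → coeffM (Q - constM (coeffM Q m) * M m) k = 0 := by
      intro k hk
      rw [coeffM_sub, coeffM_constM_mul]
      rcases hk.eq_or_lt with rfl | hlt
      · rw [(hM m).1, mul_one, sub_self]
      · rw [hQ k hlt, (hM m).2 k hlt, mul_zero, sub_self]
    obtain ⟨A, hA⟩ := ih _ hlower
    refine ⟨Function.update A m (coeffM Q m), ?_⟩
    rw [Finset.sum_range_succ, Function.update_self,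
      Finset.sum_congr rfl fun k hk => by
        rw [Function.update_of_ne (Finset.mem_range.mp hk).ne], ← hA, sub_add_cancel]

end MatrixPolynomials

/-- The part of `IsWeight` that linearity of `innerW` needs; unlike positive definiteness it
transfers to `UWeight W` by a plain change of variables. -/
def HasFiniteMoments {N : ℕ} (I : Set ℝ) (W : ℝ → Matrix (Fin N) (Fin N) ℂ) : Prop :=
  ∀ (n : ℕ) (i j), IntegrableOn (fun (x : ℝ) => (x : ℂ) ^ n * W x i j) I

lemma IsWeight.hasFiniteMoments {N : ℕ} {I : Set ℝ} {W : ℝ → Matrix (Fin N) (Fin N) ℂ}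
    (hW : IsWeight I W) : HasFiniteMoments I W :=
  hW.moments

namespace HasFiniteMoments

variable {N : ℕ} {I : Set ℝ} {W : ℝ → Matrix (Fin N) (Fin N) ℂ}

lemma integrableOn_eval_mul (hW : HasFiniteMoments I W) (r : ℂ[X]) (k l : Fin N) :
    IntegrableOn (fun x : ℝ => r.eval (x : ℂ) * W x k l) I := by
  simp_rw [eval_eq_sum_range, Finset.sum_mul, mul_assoc]
  exact integrable_finsetSum _ fun m _ => (hW m k l).const_mul _

lemma integrableOn_innerW_apply (hW : HasFiniteMoments I W) (P Q : MatPoly N) (i j : Fin N) :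
    IntegrableOn (fun x => (evalM P x * W x * (evalM Q x)ᴴ) i j) I := by
  have hexpand : ∀ x : ℝ, (evalM P x * W x * (evalM Q x)ᴴ) i j
      = ∑ l, ∑ k, (P i k * (Q j l).map (starRingEnd ℂ)).eval (x : ℂ) * W x k l := by
    intro x
    simp only [Matrix.mul_apply, Matrix.conjTranspose_apply, evalM, Finset.sum_mul, eval_mul,
      star_eval_ofReal]
    exact Finset.sum_congr rfl fun l _ => Finset.sum_congr rfl fun k _ => by ring
  simp_rw [hexpand]
  exact integrable_finsetSum _ fun l _ => integrable_finsetSum _ fun k _ =>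
    hW.integrableOn_eval_mul _ k l

lemma innerW_sub_left (hW : HasFiniteMoments I W) (P Q R : MatPoly N) :
    innerW I W (P - Q) R = innerW I W P R - innerW I W Q R := by
  ext i j
  simp only [innerW, matInt, Matrix.sub_apply, evalM_sub, Matrix.sub_mul]
  exact integral_sub (hW.integrableOn_innerW_apply P R i j) (hW.integrableOn_innerW_apply Q R i j)

lemma innerW_sum_right (hW : HasFiniteMoments I W) (P : MatPoly N) {α : Type*} (s : Finset α)
    (f : α → MatPoly N) : innerW I W P (∑ a ∈ s, f a) = ∑ a ∈ s, innerW I W P (f a) := by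
  ext i j
  simp only [innerW, matInt, Matrix.sum_apply, evalM_sum, Matrix.conjTranspose_sum,
    Matrix.mul_sum]
  exact integral_finsetSum _ fun a _ => hW.integrableOn_innerW_apply P (f a) i j

lemma innerW_constM_mul_right (hW : HasFiniteMoments I W) (A : Matrix (Fin N) (Fin N) ℂ)
    (P Q : MatPoly N) : innerW I W P (constM A * Q) = innerW I W P Q * Aᴴ := by
  ext i j
  simp only [innerW, matInt, evalM_constM_mul, Matrix.conjTranspose_mul, ← Matrix.mul_assoc]
  simp only [Matrix.mul_apply (N := Aᴴ)]
  rw [integral_finsetSum _ fun l _ => (hW.integrableOn_innerW_apply P Q i l).mul_const _]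
  exact Finset.sum_congr rfl fun l _ => integral_mul_const _ _

lemma innerW_eq_zero_of_forall_lt (hW : HasFiniteMoments I W) {M : ℕ → MatPoly N}
    (hM : ∀ k, IsMonicDeg (M k) k) {P : MatPoly N} {m : ℕ}
    (hP : ∀ k < m, innerW I W P (M k) = 0) {Q : MatPoly N}
    (hQ : ∀ k, m ≤ k → coeffM Q k = 0) : innerW I W P Q = 0 := by
  obtain ⟨A, rfl⟩ := exists_eq_sum_constM_mul_of_isMonicDeg hM m Q hQ
  rw [hW.innerW_sum_right]
  refine Finset.sum_eq_zero fun k hk => ?_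
  rw [hW.innerW_constM_mul_right, hP k (Finset.mem_range.mp hk), Matrix.zero_mul]

end HasFiniteMoments

lemma MonicOPS.innerW_eq_zero {N : ℕ} {I : Set ℝ} {W : ℝ → Matrix (Fin N) (Fin N) ℂ}
    {P : ℕ → MatPoly N} (hP : MonicOPS I W P) (hW : HasFiniteMoments I W) {n : ℕ}
    {Q : MatPoly N} (hQ : ∀ k, n ≤ k → coeffM Q k = 0) : innerW I W (P n) Q = 0 :=
  hW.innerW_eq_zero_of_forall_lt hP.1 (fun k hk => hP.2 n k hk.ne') hQ

lemma integral_eq_zero_of_ae_odd {E : Type*} [NormedAddCommGroup E] [NormedSpace ℝ E]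
    (g : ℝ → E) (hodd : ∀ᵐ x, g (-x) = -g x) : ∫ x, g x = 0 := by
  have h : ∫ x, g (-x) = -∫ x, g x := by rw [integral_congr_ae hodd, integral_neg]
  rw [integral_neg_eq_self] at h
  have h2 : (2 : ℝ) • ∫ x, g x = 0 := by rw [two_smul, ← neg_add_cancel (∫ x, g x), ← h]
  exact (smul_eq_zero.mp h2).resolve_left two_ne_zero

lemma integral_eq_two_smul_integral_Ioi_of_ae_even {E : Type*} [NormedAddCommGroup E]
    [NormedSpace ℝ E] {g : ℝ → E} (hg : Integrable g) (heven : ∀ᵐ x, g (-x) = g x) :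
    ∫ x, g x = (2 : ℝ) • ∫ x in Ioi 0, g x := by
  rw [← setIntegral_univ, ← Iic_union_Ioi (a := 0),
    setIntegral_union (Iic_disjoint_Ioi le_rfl) measurableSet_Ioi hg.integrableOn hg.integrableOn,
    ← neg_zero, ← integral_comp_neg_Ioi, neg_zero,
    integral_congr_ae (ae_restrict_of_ae heven), two_smul]

section EvenWeight

variable {N : ℕ} {W : ℝ → Matrix (Fin N) (Fin N) ℂ}

lemma innerW_XmulM_compSqM_compSqM_eq_zero (hsymm : ∀ᵐ x : ℝ, W x = W (-x))
    (P Q : MatPoly N) :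
    innerW univ W (XmulM (compSqM P)) (compSqM Q) = 0 := by
  ext i j
  rw [innerW, matInt, setIntegral_univ]
  refine integral_eq_zero_of_ae_odd _ ?_
  filter_upwards [hsymm] with x hx
  simp [← hx]

lemma HasFiniteMoments.uWeight (hW : HasFiniteMoments univ W) :
    HasFiniteMoments (Ioi 0) (UWeight W) := by
  intro n i j
  rw [← integrableOn_Ioi_comp_rpow_iff' _ two_ne_zero]
  refine IntegrableOn.congr_fun ((hW (2 * n + 2) i j).mono_set (subset_univ _)) (fun x hx => ?_)
    measurableSet_Ioi
  have hx : 0 < x := hx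
  simp only [show (2 : ℝ) - 1 = 1 by norm_num, Real.rpow_one, Real.rpow_two, UWeight,
    Real.sqrt_sq hx.le, Matrix.smul_apply, Complex.real_smul]
  push_cast
  ring

lemma innerW_uWeight (hW : HasFiniteMoments univ W) (hsymm : ∀ᵐ x : ℝ, W x = W (-x))
    (P Q : MatPoly N) :
    innerW (Ioi 0) (UWeight W) P Q
      = innerW univ W (XmulM (compSqM P)) (XmulM (compSqM Q)) := by
  ext i j
  simp only [innerW, matInt, setIntegral_univ]
  rw [integral_eq_two_smul_integral_Ioi_of_ae_even
    (integrableOn_univ.mp (hW.integrableOn_innerW_apply _ _ i j))]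
  · rw [← integral_comp_rpow_Ioi_of_pos two_pos, ← integral_smul]
    refine setIntegral_congr_fun measurableSet_Ioi fun x hx => ?_
    have hx : 0 < x := hx
    simp only [show (2 : ℝ) - 1 = 1 by norm_num, Real.rpow_one, Real.rpow_two, UWeight,
      Real.sqrt_sq hx.le, evalM_XmulM, evalM_compSqM, Matrix.smul_mul, Matrix.mul_smul,
      Matrix.conjTranspose_smul, Complex.star_def, Complex.conj_ofReal, Matrix.smul_apply,
      Complex.real_smul, smul_eq_mul]
    push_cast
    ring
  · filter_upwards [hsymm] with x hx
    simp [← hx]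

end EvenWeight

lemma MonicOPS.innerW_XmulM_compSqM_eq_zero {N : ℕ} {W : ℝ → Matrix (Fin N) (Fin N) ℂ}
    {F : ℕ → MatPoly N} (hF : MonicOPS (Ioi 0) (UWeight W) F) (hW : HasFiniteMoments univ W)
    (hsymm : ∀ᵐ x : ℝ, W x = W (-x)) (n : ℕ) {Q : MatPoly N}
    (hQ : ∀ k, 2 * n + 1 ≤ k → coeffM Q k = 0) :
    innerW univ W (XmulM (compSqM (F n))) Q = 0 := by
  refine hW.innerW_eq_zero_of_forall_lt isMonicDeg_scalar_X_pow (fun k hk => ?_) hQ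
  have hcomp : ∀ j, scalar (Fin N) (X ^ (2 * j) : ℂ[X]) = compSqM (scalar (Fin N) (X ^ j)) := by
    intro j
    rw [compSqM_scalar, X_pow_comp, ← pow_mul, mul_comm]
  obtain ⟨j, rfl | rfl⟩ := Nat.even_or_odd' k
  · rw [hcomp]
    exact innerW_XmulM_compSqM_compSqM_eq_zero hsymm _ _
  · rw [pow_succ', ← XmulM_scalar, hcomp, ← innerW_uWeight hW hsymm]
    exact hF.innerW_eq_zero hW.uWeight fun k hk => (isMonicDeg_scalar_X_pow j).2 k (by omega)

lemma Matrix.PosDef.row_eq_zero_of_mul_mul_conjTranspose_apply_eq_zero {n : Type*} [Fintype n]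
    {A B : Matrix n n ℂ} (hA : A.PosDef) {i : n} (h : (B * A * Bᴴ) i i = 0) : B i = 0 := by
  by_contra hne
  have hpos := hA.dotProduct_mulVec_pos (x := star (B i)) (by simpa using hne)
  rw [star_star] at hpos
  exact (h ▸ Matrix.mul_mul_apply B A Bᴴ i i ▸ hpos).false

lemma Complex.ae_eq_zero_of_integral_eq_zero {α : Type*} [MeasurableSpace α] {μ : Measure α}
    {f : α → ℂ} (hnonneg : ∀ᵐ x ∂μ, 0 ≤ f x) (hf : Integrable f μ) (h : ∫ x, f x ∂μ = 0) :
    f =ᵐ[μ] 0 := by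
  have hre : (fun x => (f x).re) =ᵐ[μ] 0 := by
    refine (integral_eq_zero_iff_of_nonneg_ae ?_ hf.re).mp ?_
    · exact hnonneg.mono fun x hx => (Complex.nonneg_iff.mp hx).1
    · simpa [h] using integral_re hf
  filter_upwards [hre, hnonneg] with x hre hx
  exact Complex.ext hre (Complex.nonneg_iff.mp hx).2.symm

lemma Polynomial.eq_zero_of_ae_eval_eq_zero {I : Set ℝ} (hI : volume I ≠ 0) {p : ℂ[X]}
    (h : ∀ᵐ x : ℝ ∂volume.restrict I, p.eval (x : ℂ) = 0) : p = 0 := by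
  by_contra hp
  have hfin : {x : ℝ | p.eval (x : ℂ) = 0}.Finite :=
    (p.roots.toFinset.finite_toSet.preimage Complex.ofReal_injective.injOn).subset
      fun x hx => by simpa [hp] using hx
  have hroots : ∀ᵐ x : ℝ ∂volume.restrict I, p.eval (x : ℂ) ≠ 0 := by
    simpa [ae_iff] using hfin.measure_zero (volume.restrict I)
  refine hI (Measure.restrict_eq_zero.mp (ae_eq_bot.mp ?_))
  exact Filter.eventually_false_iff_eq_bot.mp ((h.and hroots).mono fun x hx => hx.2 hx.1)

lemma IsWeight.eq_zero_of_innerW_self_eq_zero {N : ℕ} {I : Set ℝ}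
    {W : ℝ → Matrix (Fin N) (Fin N) ℂ} (hW : IsWeight I W) (hI : volume I ≠ 0) {P : MatPoly N}
    (h : innerW I W P P = 0) : P = 0 := by
  have hrow : ∀ i, ∀ᵐ x ∂volume.restrict I, evalM P x i = 0 := by
    intro i
    have hdiag : (fun x => (evalM P x * W x * (evalM P x)ᴴ) i i) =ᵐ[volume.restrict I] 0 :=
      Complex.ae_eq_zero_of_integral_eq_zero
        (hW.posdef.mono fun x hx => (hx.posSemidef.mul_mul_conjTranspose_same _).diag_nonneg)
        (hW.hasFiniteMoments.integrableOn_innerW_apply P P i i) (congrFun₂ h i i)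
    filter_upwards [hdiag, hW.posdef] with x hx hpos
    exact hpos.row_eq_zero_of_mul_mul_conjTranspose_apply_eq_zero hx
  ext i j : 1
  refine Polynomial.eq_zero_of_ae_eval_eq_zero hI ?_
  filter_upwards [hrow i] with x hx
  exact congrFun hx j

/-- If `W(x) = W(-x)` a.e., `H` are the monic orthogonal polynomials
of `W` on `ℝ` and `F` those of `U(y) = y^{1/2} W(√y)` on `(0,∞)`, then
`H_{2n+1}(x) = x · F_n(x²)` for all `n`. -/
theorem stmt5 {N : ℕ} (W : ℝ → Matrix (Fin N) (Fin N) ℂ)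
    (hW : IsWeight Set.univ W)
    (hsymm : ∀ᵐ x : ℝ, W x = W (-x))
    (H : ℕ → MatPoly N) (hH : MonicOPS Set.univ W H)
    (F : ℕ → MatPoly N) (hF : MonicOPS (Set.Ioi 0) (UWeight W) F) :
    ∀ n : ℕ, H (2 * n + 1) = XmulM (compSqM (F n)) := by
  intro n
  have hdeg := ((hH.1 (2 * n + 1)).coeffM_sub_eq_zero (hF.1 n).XmulM_compSqM)
  have hself : innerW univ W (H (2 * n + 1) - XmulM (compSqM (F n)))
      (H (2 * n + 1) - XmulM (compSqM (F n))) = 0 := by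
    rw [hW.hasFiniteMoments.innerW_sub_left, hH.innerW_eq_zero hW.hasFiniteMoments hdeg,
      hF.innerW_XmulM_compSqM_eq_zero hW.hasFiniteMoments hsymm n hdeg, sub_zero]
  exact sub_eq_zero.mp (hW.eq_zero_of_innerW_self_eq_zero (by simp) hself)
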